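/- arXiv:2002.12744 — 3 statements merged into one kernel-verified Lean document; each statement's English description precedes it below -/
import Mathlib

section
/- Let μ be a probability measure on ℝ^d × ℝ^d and define the non-stationary spectral kernel κ(x, x') = ∫_{ℝ^d × ℝ^d} k_{(ω,ω')}(x, x') dμ(ω, ω'), where k_{ω,ω'}(x, x') = (1/4)[cos(⟨ω, x⟩ − ⟨ω', x'⟩) + cos(⟨ω', x⟩ − ⟨ω, x'⟩) + cos(⟨ω, x − x'⟩) + cos(⟨ω', x − x'⟩)]. Then κ is a positive semidefinite kernel: for every n, every x₁, …, xₙ ∈ ℝ^d and every c₁, …, cₙ ∈ ℝ, ∑_{i=1}^n ∑_{j=1}^n c_i c_j κ(x_i, x_j) ≥ 0. -/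
open Real MeasureTheory
open scoped RealInnerProductSpace

/-- The symmetrized exponential-term kernel associated to a frequency pair `(ω, ω')`. -/
noncomputable def symExpKernel {d : ℕ} (ω ω' : EuclideanSpace ℝ (Fin d))
    (x x' : EuclideanSpace ℝ (Fin d)) : ℝ :=
  (1 / 4) * (Real.cos (⟪ω, x⟫ - ⟪ω', x'⟫) + Real.cos (⟪ω', x⟫ - ⟪ω, x'⟫)
    + Real.cos ⟪ω, x - x'⟫ + Real.cos ⟪ω', x - x'⟫)

lemma symExpKernel_eq {d : ℕ} (ω ω' x x' : EuclideanSpace ℝ (Fin d)) :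
    symExpKernel ω ω' x x' =
      (1 / 4) * ((Real.cos ⟪ω, x⟫ + Real.cos ⟪ω', x⟫) * (Real.cos ⟪ω, x'⟫ + Real.cos ⟪ω', x'⟫)
        + (Real.sin ⟪ω, x⟫ + Real.sin ⟪ω', x⟫) * (Real.sin ⟪ω, x'⟫ + Real.sin ⟪ω', x'⟫)) := by
  simp only [symExpKernel, inner_sub_right, Real.cos_sub]
  ring

lemma symExpKernel_sum_nonneg {d : ℕ} (ω ω' : EuclideanSpace ℝ (Fin d))
    (n : ℕ) (x : Fin n → EuclideanSpace ℝ (Fin d)) (c : Fin n → ℝ) :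
    0 ≤ ∑ i, ∑ j, c i * c j * symExpKernel ω ω' (x i) (x j) := by
  have key : ∑ i, ∑ j, c i * c j * symExpKernel ω ω' (x i) (x j)
      = (1 / 4) * ((∑ i, c i * (Real.cos ⟪ω, x i⟫ + Real.cos ⟪ω', x i⟫)) ^ 2
        + (∑ i, c i * (Real.sin ⟪ω, x i⟫ + Real.sin ⟪ω', x i⟫)) ^ 2) := by
    rw [sq, sq, Finset.sum_mul_sum, Finset.sum_mul_sum, ← Finset.sum_add_distrib,
      Finset.mul_sum]
    refine Finset.sum_congr rfl fun i _ => ?_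
    rw [← Finset.sum_add_distrib, Finset.mul_sum]
    refine Finset.sum_congr rfl fun j _ => ?_
    rw [symExpKernel_eq]
    ring
  rw [key]
  positivity

lemma symExpKernel_integrable {d : ℕ}
    (μ : Measure (EuclideanSpace ℝ (Fin d) × EuclideanSpace ℝ (Fin d)))
    [IsProbabilityMeasure μ] (a b : EuclideanSpace ℝ (Fin d)) :
    MeasureTheory.Integrable (fun p => symExpKernel p.1 p.2 a b) μ := by
  have h1 : Continuous fun p : EuclideanSpace ℝ (Fin d) × EuclideanSpace ℝ (Fin d) =>
      (⟪p.1, a⟫ : ℝ) := continuous_fst.inner continuous_const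
  have h2 : Continuous fun p : EuclideanSpace ℝ (Fin d) × EuclideanSpace ℝ (Fin d) =>
      (⟪p.2, a⟫ : ℝ) := continuous_snd.inner continuous_const
  have h3 : Continuous fun p : EuclideanSpace ℝ (Fin d) × EuclideanSpace ℝ (Fin d) =>
      (⟪p.1, b⟫ : ℝ) := continuous_fst.inner continuous_const
  have h4 : Continuous fun p : EuclideanSpace ℝ (Fin d) × EuclideanSpace ℝ (Fin d) =>
      (⟪p.2, b⟫ : ℝ) := continuous_snd.inner continuous_const
  have h5 : Continuous fun p : EuclideanSpace ℝ (Fin d) × EuclideanSpace ℝ (Fin d) =>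
      (⟪p.1, a - b⟫ : ℝ) := continuous_fst.inner continuous_const
  have h6 : Continuous fun p : EuclideanSpace ℝ (Fin d) × EuclideanSpace ℝ (Fin d) =>
      (⟪p.2, a - b⟫ : ℝ) := continuous_snd.inner continuous_const
  have hcont : Continuous (fun p : EuclideanSpace ℝ (Fin d) × EuclideanSpace ℝ (Fin d) =>
      symExpKernel p.1 p.2 a b) := by
    unfold symExpKernel
    exact continuous_const.mul
      ((((Real.continuous_cos.comp (h1.sub h4)).add
        (Real.continuous_cos.comp (h2.sub h3))).add
        (Real.continuous_cos.comp h5)).add (Real.continuous_cos.comp h6))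
  refine (integrable_const (1 : ℝ)).mono' hcont.aestronglyMeasurable (ae_of_all _ fun p => ?_)
  simp only [norm_eq_abs, symExpKernel]
  rw [abs_le]
  constructor <;>
    nlinarith [Real.cos_le_one ((⟪p.1, a⟫ : ℝ) - ⟪p.2, b⟫), Real.neg_one_le_cos ((⟪p.1, a⟫ : ℝ) - ⟪p.2, b⟫),
      Real.cos_le_one ((⟪p.2, a⟫ : ℝ) - ⟪p.1, b⟫), Real.neg_one_le_cos ((⟪p.2, a⟫ : ℝ) - ⟪p.1, b⟫),
      Real.cos_le_one (⟪p.1, a - b⟫ : ℝ), Real.neg_one_le_cos (⟪p.1, a - b⟫ : ℝ),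
      Real.cos_le_one (⟪p.2, a - b⟫ : ℝ), Real.neg_one_le_cos (⟪p.2, a - b⟫ : ℝ)]

/-- The non-stationary spectral kernel
`κ(x, x') = ∫ k_{(ω,ω')}(x, x') dμ(ω, ω')`, with `μ` a probability measure on
frequency pairs, is positive semidefinite. -/
theorem nonstationary_spectral_kernel_posSemidef (d : ℕ)
    (μ : Measure (EuclideanSpace ℝ (Fin d) × EuclideanSpace ℝ (Fin d)))
    [IsProbabilityMeasure μ]
    (n : ℕ) (x : Fin n → EuclideanSpace ℝ (Fin d)) (c : Fin n → ℝ) :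
    0 ≤ ∑ i, ∑ j, c i * c j * ∫ p, symExpKernel p.1 p.2 (x i) (x j) ∂μ := by
  have key : ∑ i, ∑ j, c i * c j * ∫ p, symExpKernel p.1 p.2 (x i) (x j) ∂μ
      = ∫ p, ∑ i, ∑ j, c i * c j * symExpKernel p.1 p.2 (x i) (x j) ∂μ := by
    rw [integral_finset_sum _ fun i _ => integrable_finset_sum _ fun j _ =>
      (symExpKernel_integrable μ (x i) (x j)).const_mul _]
    refine Finset.sum_congr rfl fun i _ => ?_
    rw [integral_finset_sum _ fun j _ => (symExpKernel_integrable μ (x i) (x j)).const_mul _]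
    exact Finset.sum_congr rfl fun j _ => (integral_const_mul _ _).symm
  rw [key]
  exact integral_nonneg fun p => symExpKernel_sum_nonneg p.1 p.2 n x c
end

section
/- Let φ ∈ ℝ^m with t := ‖φ‖² satisfying 1/2 < t ≤ 1, let σ > 0 satisfy σ² ≥ −log(2t − 1)/t, and let ω, ω' ∈ ℝ^m be independent, each distributed according to the product measure whose m coordinates are i.i.d. real Gaussians with mean 0 and variance σ². Then E[(1/2)(cos(⟨ω − ω', φ⟩) + 1)] = (1/2)(exp(−σ² t) + 1) ≤ t. -/
/-!
Since `ω` and `ω'` are independent, `E[cos ⟪ω - ω', φ⟫] = Re (χ(φ) · conj χ(φ)) = |χ(φ)|²`, where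
`χ(φ) = exp (-σ² ‖φ‖² / 2)` is the characteristic function of the isotropic Gaussian. The bound is
the variance condition exponentiated: `exp (-σ² t) ≤ 2t - 1`.
-/

open Real MeasureTheory ProbabilityTheory
open scoped RealInnerProductSpace

section

variable {E : Type*} [NormedAddCommGroup E] [InnerProductSpace ℝ E] [MeasurableSpace E]
  [OpensMeasurableSpace E]

lemma integral_cos_inner_sub_prod (μ ν : Measure E) [IsFiniteMeasure μ] [IsFiniteMeasure ν]
    (t : E) :
    ∫ p : E × E, cos ⟪p.1 - p.2, t⟫ ∂(μ.prod ν) = (charFun μ t * charFun ν (-t)).re := by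
  have hcos (p : E × E) : cos ⟪p.1 - p.2, t⟫ =
      (Complex.exp (⟪p.1, t⟫ * Complex.I) * Complex.exp (⟪p.2, -t⟫ * Complex.I)).re := by
    rw [← Complex.exp_add, inner_neg_right, inner_sub_left, ← Complex.exp_ofReal_mul_I_re]
    push_cast
    ring_nf
  have hint (s : E) (κ : Measure E) [IsFiniteMeasure κ] :
      Integrable (fun x : E ↦ Complex.exp (⟪x, s⟫ * Complex.I)) κ :=
    (integrable_const (1 : ℝ)).mono (by fun_prop) (by simp [Complex.norm_exp])
  simp_rw [hcos]
  have hre := integral_re ((hint t μ).mul_prod (hint (-t) ν))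
  simp only [RCLike.re_to_complex] at hre
  rw [hre, integral_prod_mul (f := fun x ↦ Complex.exp (⟪x, t⟫ * Complex.I))
    (g := fun x ↦ Complex.exp (⟪x, -t⟫ * Complex.I))]
  rfl

lemma integral_cos_inner_sub_prod_self (μ : Measure E) [IsFiniteMeasure μ] (t : E) :
    ∫ p : E × E, cos ⟪p.1 - p.2, t⟫ ∂(μ.prod μ) = ‖charFun μ t‖ ^ 2 := by
  rw [integral_cos_inner_sub_prod, charFun_neg, Complex.mul_conj, Complex.normSq_eq_norm_sq]
  norm_cast

lemma integral_half_mul_cos_inner_sub_add_one (μ : Measure E) [IsProbabilityMeasure μ] (t : E) :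
    ∫ p : E × E, 1 / 2 * (cos ⟪p.1 - p.2, t⟫ + 1) ∂(μ.prod μ) = 1 / 2 * (‖charFun μ t‖ ^ 2 + 1) := by
  have hmeas : Measurable fun p : E × E ↦ ⟪p.1 - p.2, t⟫ := by
    simp_rw [inner_sub_left]
    fun_prop
  have hcos : Integrable (fun p : E × E ↦ cos ⟪p.1 - p.2, t⟫) (μ.prod μ) :=
    (integrable_const (1 : ℝ)).mono (measurable_cos.comp hmeas).aestronglyMeasurable
      (by simp [abs_cos_le_one])
  rw [integral_const_mul, integral_add hcos (integrable_const 1),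
    integral_cos_inner_sub_prod_self]
  simp

end

lemma charFun_map_toLp_pi_gaussianReal {ι : Type*} [Fintype ι] (v : NNReal)
    (t : EuclideanSpace ℝ ι) :
    charFun ((Measure.pi fun _ : ι ↦ gaussianReal 0 v).map (WithLp.toLp 2)) t =
      Complex.exp (-(v * ‖t‖ ^ 2 / 2) : ℝ) := by
  rw [charFun_pi]
  simp_rw [charFun_gaussianReal, ← Complex.exp_sum, EuclideanSpace.real_norm_sq_eq]
  congr 1
  push_cast
  simp [Finset.mul_sum, Finset.sum_div]

lemma integral_half_mul_cos_inner_sub_add_one_pi_gaussianReal {ι : Type*} [Fintype ι]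
    (v : NNReal) (t : EuclideanSpace ℝ ι) :
    ∫ p : EuclideanSpace ℝ ι × EuclideanSpace ℝ ι, 1 / 2 * (cos ⟪p.1 - p.2, t⟫ + 1)
        ∂(((Measure.pi fun _ : ι ↦ gaussianReal 0 v).map (WithLp.toLp 2)).prod
          ((Measure.pi fun _ : ι ↦ gaussianReal 0 v).map (WithLp.toLp 2))) =
      1 / 2 * (exp (-v * ‖t‖ ^ 2) + 1) := by
  have : IsProbabilityMeasure ((Measure.pi fun _ : ι ↦ gaussianReal 0 v).map (WithLp.toLp 2)) :=
    Measure.isProbabilityMeasure_map (by fun_prop)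
  rw [integral_half_mul_cos_inner_sub_add_one, charFun_map_toLp_pi_gaussianReal,
    Complex.norm_exp_ofReal, ← exp_nat_mul]
  congr 3
  push_cast
  ring

lemma half_exp_neg_mul_add_one_le {s t : ℝ} (ht : 1 / 2 < t)
    (hs : -log (2 * t - 1) / t ≤ s) : 1 / 2 * (exp (-s * t) + 1) ≤ t := by
  have hlog : -s * t ≤ log (2 * t - 1) := by
    have := (div_le_iff₀ (by linarith)).mp hs
    linarith
  have := (exp_le_exp.mpr hlog).trans_eq (exp_log (by linarith))
  linarith

theorem deep_spectral_kernel_diagonal_decreasing_general (m : ℕ)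
    (φ : EuclideanSpace ℝ (Fin m)) (σ : ℝ)
    (ht1 : 1 / 2 < ‖φ‖ ^ 2)
    (hvar : σ ^ 2 ≥ -Real.log (2 * ‖φ‖ ^ 2 - 1) / ‖φ‖ ^ 2) :
    (∫ p : EuclideanSpace ℝ (Fin m) × EuclideanSpace ℝ (Fin m),
        (1 / 2) * (Real.cos ⟪p.1 - p.2, φ⟫ + 1)
        ∂(Measure.prod
            (Measure.map (WithLp.toLp 2) (Measure.pi fun _ : Fin m => gaussianReal 0 ⟨σ ^ 2, sq_nonneg σ⟩) :
              Measure (EuclideanSpace ℝ (Fin m)))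
            (Measure.map (WithLp.toLp 2) (Measure.pi fun _ : Fin m => gaussianReal 0 ⟨σ ^ 2, sq_nonneg σ⟩) :
              Measure (EuclideanSpace ℝ (Fin m))))
      = (1 / 2) * (Real.exp (-(σ ^ 2) * ‖φ‖ ^ 2) + 1))
    ∧ (1 / 2) * (Real.exp (-(σ ^ 2) * ‖φ‖ ^ 2) + 1) ≤ ‖φ‖ ^ 2 :=
  ⟨integral_half_mul_cos_inner_sub_add_one_pi_gaussianReal _ φ,
    half_exp_neg_mul_add_one_le ht1 hvar⟩

/-- Layer recursion of deep spectral kernels: if `t = ‖φ‖² ∈ (1/2, 1]` and the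
Gaussian initialization variance satisfies `σ² ≥ -log(2t - 1)/t`, then the next
layer's diagonal `E[(1/2)(cos ⟪ω - ω', φ⟫ + 1)] = (1/2)(exp(-σ² t) + 1)` does not
exceed `t`. -/
theorem deep_spectral_kernel_diagonal_decreasing (m : ℕ)
    (φ : EuclideanSpace ℝ (Fin m)) (σ : ℝ) (hσ : 0 < σ)
    (ht1 : 1 / 2 < ‖φ‖ ^ 2) (ht2 : ‖φ‖ ^ 2 ≤ 1)
    (hvar : σ ^ 2 ≥ -Real.log (2 * ‖φ‖ ^ 2 - 1) / ‖φ‖ ^ 2) :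
    (∫ p : EuclideanSpace ℝ (Fin m) × EuclideanSpace ℝ (Fin m),
        (1 / 2) * (Real.cos ⟪p.1 - p.2, φ⟫ + 1)
        ∂(Measure.prod
            (Measure.map (WithLp.toLp 2) (Measure.pi fun _ : Fin m => gaussianReal 0 ⟨σ ^ 2, sq_nonneg σ⟩) :
              Measure (EuclideanSpace ℝ (Fin m)))
            (Measure.map (WithLp.toLp 2) (Measure.pi fun _ : Fin m => gaussianReal 0 ⟨σ ^ 2, sq_nonneg σ⟩) :
              Measure (EuclideanSpace ℝ (Fin m))))
      = (1 / 2) * (Real.exp (-(σ ^ 2) * ‖φ‖ ^ 2) + 1))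
    ∧ (1 / 2) * (Real.exp (-(σ ^ 2) * ‖φ‖ ^ 2) + 1) ≤ ‖φ‖ ^ 2 :=
  deep_spectral_kernel_diagonal_decreasing_general m φ σ ht1 hvar
end

section
/- Let a₀ ∈ (1/2, 1] and let (s_l)_{l≥1} be nonnegative reals. Define recursively a_l = (1/2)(exp(−s_l · a_{l−1}) + 1) for l ≥ 1, and assume s_l ≥ −log(2·a_{l−1} − 1)/a_{l−1} for every l ≥ 1. Then for every l ≥ 1, a_l ∈ (1/2, 1] and a_l ≤ a_{l−1}; in particular a_L ≤ a₀ for every depth L. -/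
open Real

/-- Depth recursion of kernel diagonals: starting from `a₀ ∈ (1/2, 1]` with
nonnegative variances `s_l` satisfying `s_l ≥ -log(2a_{l-1} - 1)/a_{l-1}` and the
recursion `a_l = (1/2)(exp(-s_l a_{l-1}) + 1)`, every layer satisfies
`a_l ∈ (1/2, 1]` and `a_l ≤ a_{l-1}`; in particular `a_L ≤ a₀` for every `L`. -/
theorem kernel_diagonal_recursion_decreasing (a s : ℕ → ℝ)
    (h0 : 1 / 2 < a 0 ∧ a 0 ≤ 1)
    (hs : ∀ l : ℕ, 0 ≤ s (l + 1))
    (hrec : ∀ l : ℕ, a (l + 1) = (1 / 2) * (Real.exp (-(s (l + 1) * a l)) + 1))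
    (hvar : ∀ l : ℕ, s (l + 1) ≥ -Real.log (2 * a l - 1) / a l) :
    (∀ l : ℕ, (1 / 2 < a (l + 1) ∧ a (l + 1) ≤ 1) ∧ a (l + 1) ≤ a l)
    ∧ (∀ L : ℕ, a L ≤ a 0) := by
  have hinv : ∀ l : ℕ, 1 / 2 < a l ∧ a l ≤ 1 := by
    intro l
    induction l with
    | zero => exact h0
    | succ n ih =>
      have hpos : 0 < a n := lt_trans (by norm_num) ih.1
      have hsa : 0 ≤ s (n + 1) * a n := mul_nonneg (hs n) hpos.le
      have he1 : Real.exp (-(s (n + 1) * a n)) ≤ 1 := by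
        rw [Real.exp_le_one_iff]; linarith
      have he0 : 0 < Real.exp (-(s (n + 1) * a n)) := Real.exp_pos _
      constructor
      · rw [hrec n]; linarith
      · rw [hrec n]; linarith
  have hdec : ∀ l : ℕ, a (l + 1) ≤ a l := by
    intro l
    have h1 := (hinv l).1
    have hpos : 0 < a l := lt_trans (by norm_num) h1
    have h2a : 0 < 2 * a l - 1 := by linarith
    have hsl : s (l + 1) * a l ≥ -Real.log (2 * a l - 1) := by
      have := hvar l
      have := (div_le_iff₀ hpos).mp this
      linarith
    have hexp : Real.exp (-(s (l + 1) * a l)) ≤ 2 * a l - 1 := by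
      calc Real.exp (-(s (l + 1) * a l)) ≤ Real.exp (Real.log (2 * a l - 1)) :=
            Real.exp_le_exp.mpr (by linarith)
        _ = 2 * a l - 1 := Real.exp_log h2a
    rw [hrec l]; linarith
  refine ⟨fun l => ⟨hinv (l + 1), hdec l⟩, fun L => ?_⟩
  induction L with
  | zero => exact le_refl _
  | succ n ih => exact le_trans (hdec n) ih
end
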